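/- Fix n ≥ 3, 2 ≤ i ≤ n−1, and α, β ≥ 0 with (−1+ε)α + c ≤ β. Let x ∈ ℝ^n with y := Wx + θ satisfy: y_{i−1} = β (respectively y_{i+1} = β); y_i ≥ α; y_{i+1} ≤ β (respectively y_{i−1} ≤ β); and y_k ≤ 0 for all k ∉ {i−1, i, i+1}. Then w_{i−1}^⊤(−x + [y]_+) = c − β + (−1+ε)[y_i]_+ + (−1−δ)[y_{i+1}]_+ ≤ 0 (respectively w_{i+1}^⊤(−x + [y]_+) = c − β + (−1+ε)[y_i]_+ + (−1−δ)[y_{i−1}]_+ ≤ 0), where w_j^⊤ denotes the j-th row of W. (This shows the vector field points inward on the boundaries {y_{i±1} = β} of R_FI^{(i)}.) -/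

import Mathlib

/-!
Since `y = W x + c`, the rate `w_pᵀ(-x + [y]₊)` equals `c - y_p + w_pᵀ [y]₊`, and in `R_FI^{(i)}` only
the three middle coordinates of `[y]₊` can be nonzero. For `p = i ∓ 1` we have `W_pp = 0`, so on the
face `y_p = β` the rate is `c - β + (-1+ε)[y_i]₊ + (-1-δ)[y_{i±1}]₊ ≤ c - β + (-1+ε)α ≤ 0`.
-/

open Matrix

def cstlnMatrix (n : ℕ) (ε δ : ℝ) : Matrix (Fin n) (Fin n) ℝ :=
  of fun k l =>
    if (k : ℕ) = (l : ℕ) then 0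
    else if ((k : ℤ) - (l : ℤ)).natAbs = 1 then -1 + ε else -1 - δ

section cstlnMatrix

variable {n : ℕ} {ε δ : ℝ} {k l : Fin n}

theorem cstlnMatrix_apply_self : cstlnMatrix n ε δ k k = 0 := if_pos rfl

theorem cstlnMatrix_apply_of_natAbs_eq_one (h : ((k : ℤ) - (l : ℤ)).natAbs = 1) :
    cstlnMatrix n ε δ k l = -1 + ε := by
  rw [cstlnMatrix, of_apply, if_neg (by omega), if_pos h]

theorem cstlnMatrix_apply_of_one_lt_natAbs (h : 1 < ((k : ℤ) - (l : ℤ)).natAbs) :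
    cstlnMatrix n ε δ k l = -1 - δ := by
  rw [cstlnMatrix, of_apply, if_neg (by omega), if_neg (by omega)]

end cstlnMatrix

section rate

variable {ι : Type*} [Fintype ι] (W : Matrix ι ι ℝ) {c : ℝ} {x y : ι → ℝ}

theorem sum_mul_neg_add_max_eq (hy : ∀ k, y k = W.mulVec x k + c) (p : ι) :
    ∑ j, W p j * (-(x j) + max (y j) 0) = c - y p + ∑ j, W p j * max (y j) 0 := by
  simp only [hy p, mulVec, dotProduct, mul_add, mul_neg, Finset.sum_add_distrib,
    Finset.sum_neg_distrib]
  ring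

theorem sum_mul_max_eq_of_support [DecidableEq ι] {a b d : ι}
    (hab : a ≠ b) (had : a ≠ d) (hbd : b ≠ d)
    (hoff : ∀ k, k ≠ a → k ≠ b → k ≠ d → y k ≤ 0) (p : ι) :
    ∑ j, W p j * max (y j) 0 =
      W p a * max (y a) 0 + W p b * max (y b) 0 + W p d * max (y d) 0 := by
  rw [← Finset.sum_subset (Finset.subset_univ {a, b, d}), Finset.sum_insert (by simp [hab, had]),
    Finset.sum_pair hbd, add_assoc]
  intro k _ hk
  simp only [Finset.mem_insert, Finset.mem_singleton, not_or] at hk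
  rw [max_eq_right (hoff k hk.1 hk.2.1 hk.2.2), mul_zero]

theorem sum_mul_neg_add_max_eq_of_boundary [DecidableEq ι] {ε δ β : ℝ} {p m q : ι}
    (hy : ∀ k, y k = W.mulVec x k + c) (hpm : p ≠ m) (hpq : p ≠ q) (hmq : m ≠ q)
    (hoff : ∀ k, k ≠ p → k ≠ m → k ≠ q → y k ≤ 0)
    (hWp : W p p = 0) (hWm : W p m = -1 + ε) (hWq : W p q = -1 - δ) (hyp : y p = β) :
    ∑ j, W p j * (-(x j) + max (y j) 0) =
      c - β + (-1 + ε) * max (y m) 0 + (-1 - δ) * max (y q) 0 := by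
  rw [sum_mul_neg_add_max_eq W hy, sum_mul_max_eq_of_support W hpm hpq hmq hoff, hWp, hWm, hWq,
    hyp]
  ring

end rate

theorem boundary_rate_nonpos {ε δ c α β u v : ℝ} (hε1 : ε < 1) (hδ : 0 < δ)
    (hfeas : (-1 + ε) * α + c ≤ β) (hu : α ≤ u) :
    c - β + (-1 + ε) * max u 0 + (-1 - δ) * max v 0 ≤ 0 := by
  have hm : (-1 + ε) * max u 0 ≤ (-1 + ε) * α :=
    mul_le_mul_of_nonpos_left (hu.trans (le_max_left u 0)) (by linarith)
  have hq : (-1 - δ) * max v 0 ≤ 0 :=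
    mul_nonpos_of_nonpos_of_nonneg (by linarith) (le_max_right v 0)
  linarith

/-- vector field points inward on the boundaries `y_{i±1} = β` of
`R_FI^{(i)}`. Indices are 0-based: `1 ≤ i` and `i + 1 < n` correspond to the
1-based statement `2 ≤ i ≤ n−1`. Both cases (boundary at `i−1`, respectively
`i+1`) are stated. -/
theorem cstln_inward_on_beta_boundaries (n i : ℕ)
    (hi1 : 1 ≤ i) (hi2 : i + 1 < n)
    (ε δ c : ℝ) (hε1 : ε < 1) (hδ : 0 < δ)
    (W : Matrix (Fin n) (Fin n) ℝ)
    (hW : ∀ k l : Fin n, W k l =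
      if (k : ℕ) = (l : ℕ) then 0
      else if ((k : ℤ) - (l : ℤ)).natAbs = 1 then -1 + ε else -1 - δ)
    (α β : ℝ)
    (hfeas : (-1 + ε) * α + c ≤ β)
    (x y : Fin n → ℝ) (hy : ∀ k, y k = W.mulVec x k + c)
    (hyi : α ≤ y ⟨i, by omega⟩)
    (hoff : ∀ k : Fin n, (k : ℕ) ≠ i - 1 → (k : ℕ) ≠ i → (k : ℕ) ≠ i + 1 → y k ≤ 0) :
    -- case `y_{i−1} = β`
    ((y ⟨i - 1, by omega⟩ = β ∧ y ⟨i + 1, by omega⟩ ≤ β) →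
      ((∑ j, W ⟨i - 1, by omega⟩ j * (-(x j) + max (y j) 0)) =
        c - β + (-1 + ε) * max (y ⟨i, by omega⟩) 0
          + (-1 - δ) * max (y ⟨i + 1, by omega⟩) 0 ∧
       (∑ j, W ⟨i - 1, by omega⟩ j * (-(x j) + max (y j) 0)) ≤ 0)) ∧
    -- case `y_{i+1} = β`
    ((y ⟨i + 1, by omega⟩ = β ∧ y ⟨i - 1, by omega⟩ ≤ β) →
      ((∑ j, W ⟨i + 1, by omega⟩ j * (-(x j) + max (y j) 0)) =
        c - β + (-1 + ε) * max (y ⟨i, by omega⟩) 0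
          + (-1 - δ) * max (y ⟨i - 1, by omega⟩) 0 ∧
       (∑ j, W ⟨i + 1, by omega⟩ j * (-(x j) + max (y j) 0)) ≤ 0)) := by
  obtain rfl : W = cstlnMatrix n ε δ := Matrix.ext hW
  set a : Fin n := ⟨i - 1, by omega⟩
  set b : Fin n := ⟨i, by omega⟩
  set d : Fin n := ⟨i + 1, by omega⟩
  have hab : a ≠ b := Fin.ne_of_val_ne (by simp [a, b]; omega)
  have had : a ≠ d := Fin.ne_of_val_ne (by simp [a, d])
  have hbd : b ≠ d := Fin.ne_of_val_ne (by simp [b, d])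
  have hoff' (k : Fin n) (ha : k ≠ a) (hb : k ≠ b) (hd : k ≠ d) : y k ≤ 0 :=
    hoff k (Fin.val_ne_of_ne ha) (Fin.val_ne_of_ne hb) (Fin.val_ne_of_ne hd)
  refine ⟨fun ⟨hya, _⟩ => ?_, fun ⟨hyd, _⟩ => ?_⟩
  · have h := sum_mul_neg_add_max_eq_of_boundary _ hy hab had hbd hoff' cstlnMatrix_apply_self
      (cstlnMatrix_apply_of_natAbs_eq_one (by simp [a, b]; omega))
      (cstlnMatrix_apply_of_one_lt_natAbs (by simp [a, d]; omega)) hya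
    exact ⟨h, h ▸ boundary_rate_nonpos hε1 hδ hfeas hyi⟩
  · have h := sum_mul_neg_add_max_eq_of_boundary _ hy hbd.symm had.symm hab.symm
      (fun k hd hb ha => hoff' k ha hb hd) cstlnMatrix_apply_self
      (cstlnMatrix_apply_of_natAbs_eq_one (by simp [b, d]))
      (cstlnMatrix_apply_of_one_lt_natAbs (by simp [a, d]; omega)) hyd
    exact ⟨h, h ▸ boundary_rate_nonpos hε1 hδ hfeas hyi⟩
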